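/- Let e, f, g be pairwise commuting elements of the Pauli n-group with global phases ±1 forming an AvN triple. Then the XOR theory consisting of the four parity equations associated to e, f, g, and the product efg is inconsistent (summing all four equations yields 0 = 1). -/

import Mathlib

/-- Pauli labels. -/
inductive PLbl : Type
  | I | X | Y | Z
deriving DecidableEq

instance instFintypePLbl : Fintype PLbl :=
  ⟨{PLbl.I, PLbl.X, PLbl.Y, PLbl.Z}, fun x => by cases x <;> simp⟩

open PLbl

/-- Multiplication of Pauli labels, discarding the phase. -/
def lmul : PLbl → PLbl → PLbl
  | I, p => p
  | p, I => p
  | X, X => I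
  | Y, Y => I
  | Z, Z => I
  | X, Y => Z
  | Y, X => Z
  | Y, Z => X
  | Z, Y => X
  | Z, X => Y
  | X, Z => Y

/-- Phase (as a power of i, in ℤ₄) arising from multiplying two Pauli labels:
XY = iZ, YZ = iX, ZX = iY, YX = -iZ, ZY = -iX, XZ = -iY. -/
def lphase : PLbl → PLbl → ZMod 4
  | X, Y => 1
  | Y, Z => 1
  | Z, X => 1
  | Y, X => 3
  | Z, Y => 3
  | X, Z => 3
  | _, _ => 0

/-- An element of the Pauli n-group: a global phase i^α and a tuple of labels. -/
def PauliEl (n : ℕ) : Type := ZMod 4 × (Fin n → PLbl)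

/-- Multiplication in the Pauli n-group. -/
def pmul {n : ℕ} (p q : PauliEl n) : PauliEl n :=
  (p.1 + q.1 + ∑ i, lphase (p.2 i) (q.2 i), fun i => lmul (p.2 i) (q.2 i))


/-- The right-hand side of the parity equation of an element of phase (-1)^a
(phase exponent 0 or 2 in ℤ₄). -/
def rhs (α : ZMod 4) : ZMod 2 := if α = 2 then 1 else 0

/-- The parity equation of a Pauli group element, with one ℤ₂-variable per
(Pauli label, site) pair. -/
def xorEq {n : ℕ} (p : PauliEl n) (v : PLbl × Fin n → ZMod 2) : Prop :=
  (∑ i ∈ Finset.univ.filter (fun i => p.2 i ≠ I), v (p.2 i, i)) = rhs p.1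

def wf (x y z : ZMod 2) : PLbl → ZMod 2
  | I => 0 | X => x | Y => y | Z => z

lemma aux1' : ∀ (x y z : ZMod 2) (a b c : PLbl), (a = b ∨ b = c ∨ a = c) →
    wf x y z a + wf x y z b + wf x y z c + wf x y z (lmul a (lmul b c)) = 0 := by decide

lemma aux1 (w : PLbl → ZMod 2) (hw : w I = 0) (a b c : PLbl)
    (h : a = b ∨ b = c ∨ a = c) :
    w a + w b + w c + w (lmul a (lmul b c)) = 0 := by
  have hwe : w = wf (w X) (w Y) (w Z) := by funext p; cases p <;> simp [wf, hw]
  rw [hwe]; exact aux1' _ _ _ a b c h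

lemma aux2 : ∀ a b c : PLbl, (a = b ∨ b = c ∨ a = c) →
    lphase b c + lphase a (lmul b c) =
      if a = c ∧ c ≠ b ∧ a ≠ I ∧ b ≠ I ∧ c ≠ I then 2 else 0 := by decide

/-- For an AvN triple ⟨e,f,g⟩, the XOR theory consisting of the parity equations
of e, f, g and efg is inconsistent. -/
theorem avn_triple_theory_inconsistent {n : ℕ} (e f g : PauliEl n)
    (hpe : e.1 = 0 ∨ e.1 = 2) (hpf : f.1 = 0 ∨ f.1 = 2) (hpg : g.1 = 0 ∨ g.1 = 2)
    (hef : pmul e f = pmul f e) (hfg : pmul f g = pmul g f) (heg : pmul e g = pmul g e)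
    (hcond1 : ∀ i, e.2 i = f.2 i ∨ f.2 i = g.2 i ∨ e.2 i = g.2 i)
    (hcond2 : Odd (Finset.univ.filter (fun i =>
      e.2 i = g.2 i ∧ g.2 i ≠ f.2 i ∧ e.2 i ≠ I ∧ f.2 i ≠ I ∧ g.2 i ≠ I)).card) :
    ¬ ∃ v : PLbl × Fin n → ZMod 2,
      xorEq e v ∧ xorEq f v ∧ xorEq g v ∧ xorEq (pmul e (pmul f g)) v := by
  rintro ⟨v, he, hf, hg, hh⟩
  set h : PauliEl n := pmul e (pmul f g) with hdef
  simp only [xorEq] at he hf hg hh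
  have hlbl : ∀ i, h.2 i = lmul (e.2 i) (lmul (f.2 i) (g.2 i)) := fun i => rfl
  have key : rhs e.1 + rhs f.1 + rhs g.1 + rhs h.1 = 0 := by
    rw [← he, ← hf, ← hg, ← hh]
    have rewr : ∀ p : PauliEl n,
        (∑ i ∈ Finset.univ.filter (fun i => p.2 i ≠ I), v (p.2 i, i)) =
        ∑ i, (if p.2 i ≠ I then v (p.2 i, i) else 0) := fun p => Finset.sum_filter _ _
    rw [rewr e, rewr f, rewr g, rewr h, ← Finset.sum_add_distrib,
      ← Finset.sum_add_distrib, ← Finset.sum_add_distrib]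
    refine Finset.sum_eq_zero fun i _ => ?_
    have := aux1 (fun a => if a ≠ I then v (a, i) else 0) (by simp)
      (e.2 i) (f.2 i) (g.2 i) (hcond1 i)
    simpa [hlbl i] using this
  have hphase : h.1 = e.1 + f.1 + g.1 + 2 := by
    show e.1 + (f.1 + g.1 + ∑ i, lphase (f.2 i) (g.2 i)) +
        ∑ i, lphase (e.2 i) (lmul (f.2 i) (g.2 i)) = _
    have hsum : (∑ i, lphase (f.2 i) (g.2 i)) +
        ∑ i, lphase (e.2 i) (lmul (f.2 i) (g.2 i)) = 2 := by
      rw [← Finset.sum_add_distrib]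
      have : ∀ i : Fin n, lphase (f.2 i) (g.2 i) + lphase (e.2 i) (lmul (f.2 i) (g.2 i)) =
          if e.2 i = g.2 i ∧ g.2 i ≠ f.2 i ∧ e.2 i ≠ I ∧ f.2 i ≠ I ∧ g.2 i ≠ I then 2 else 0 :=
        fun i => aux2 _ _ _ (hcond1 i)
      rw [Finset.sum_congr rfl (fun i _ => this i), ← Finset.sum_filter, Finset.sum_const]
      obtain ⟨k, hk⟩ := hcond2
      rw [hk, nsmul_eq_mul]
      push_cast
      ring_nf
      have h4 : (4 : ZMod 4) = 0 := rfl
      linear_combination (k : ZMod 4) * h4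
    rw [add_assoc, add_assoc, add_assoc, hsum]
    ring
  rw [hphase] at key
  rcases hpe with h1 | h1 <;> rcases hpf with h2 | h2 <;> rcases hpg with h3 | h3 <;>
    rw [h1, h2, h3] at key <;> revert key <;> decide
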